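/- Let n ≥ 2, p < 1, δ = 2/(n + 1 − p), K > 0 and R̄ > 0. Then there exists a constant A > K² such that the function w(x) = (‖x'‖² − A) x_n^δ, where x = (x', x_n) with x' = (x₁, …, x_{n−1}), is convex on the half-ball B_K⁺ = {x ∈ ℝⁿ : ‖x‖ < K, x_n > 0} and satisfies det D²w(x) ≥ R̄ (−w(x))^{p−1} for all x ∈ B_K⁺. -/

import Mathlib

open MeasureTheory Metric Set Filter

/-- The Hessian matrix `(∂²w/∂xᵢ∂xⱼ(x))` of `w : ℝⁿ → ℝ` at `x`. -/
noncomputable def hess {n : ℕ} (u : EuclideanSpace ℝ (Fin n) → ℝ) (x : EuclideanSpace ℝ (Fin n)) :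
    Matrix (Fin n) (Fin n) ℝ :=
  fun i j => fderiv ℝ (fun y => fderiv ℝ u y (EuclideanSpace.single j 1)) x (EuclideanSpace.single i 1)

/-!
Write `t = x_N` and `q = ‖x'‖² = ‖x‖² - t²`. The Hessian of `w = (q - A) t^δ` is `t^(δ-2)` times an
arrowhead matrix: diagonal `2t²` on the `x'` block, border `2δt x'`, corner `δ(δ-1)(q - A)`. Its
Schur complement gives `det D²w = 2^(n-1) δ ((1-δ)(A-q) - 2δq) t^(δn-2)`, and the choice of `δ` makes
`δn - 2 = δ(p-1)`, the exponent of `t` in `(-w)^(p-1) = (A-q)^(p-1) t^(δ(p-1))`. The same quantity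
controls convexity: `D²w(v,v) = t^(δ-2) (2‖u'‖² + δ((1-δ)(A-q) - 2δq) v_N²)` with `u = t v + δ v_N x`.
Since `q < K²` on `B_K⁺`, both hold once `A - K²` is large.
-/

open scoped Topology RealInnerProductSpace

section SecondDerivativeTest

variable {E : Type*} [NormedAddCommGroup E] [NormedSpace ℝ E]

theorem convexOn_of_hasFDerivAt2_nonneg {s : Set E} (hs : Convex ℝ s) {f : E → ℝ}
    {f' : E → E →L[ℝ] ℝ} {f'' : E → E → E →L[ℝ] ℝ}
    (hf : ∀ x ∈ s, HasFDerivAt f (f' x) x)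
    (hf' : ∀ x ∈ s, ∀ v, HasFDerivAt (fun y => f' y v) (f'' x v) x)
    (hf''₀ : ∀ x ∈ s, ∀ v, 0 ≤ f'' x v v) : ConvexOn ℝ s f := by
  refine ⟨hs, fun x hx y hy a b ha hb hab => ?_⟩
  have hline : ∀ τ ∈ Icc (0 : ℝ) 1, AffineMap.lineMap x y τ ∈ s := fun τ hτ =>
    hs.lineMap_mem hx hy hτ
  have hφ : ConvexOn ℝ (Icc (0 : ℝ) 1) (fun τ => f (AffineMap.lineMap x y τ)) := by
    refine convexOn_of_hasDerivWithinAt2_nonneg (convex_Icc 0 1)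
      (f' := fun τ => f' (AffineMap.lineMap x y τ) (y - x))
      (f'' := fun τ => f'' (AffineMap.lineMap x y τ) (y - x) (y - x)) ?_ ?_ ?_ ?_
    · exact fun τ hτ => ((hf _ (hline τ hτ)).comp_hasDerivAt τ
        AffineMap.hasDerivAt_lineMap).continuousAt.continuousWithinAt
    · exact fun τ hτ => ((hf _ (hline τ (interior_subset hτ))).comp_hasDerivAt τ
        AffineMap.hasDerivAt_lineMap).hasDerivWithinAt
    · exact fun τ hτ => ((hf' _ (hline τ (interior_subset hτ)) _).comp_hasDerivAt τ
        AffineMap.hasDerivAt_lineMap).hasDerivWithinAt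
    · exact fun τ hτ => hf''₀ _ (hline τ (interior_subset hτ)) _
  obtain rfl : a = 1 - b := by linarith
  simpa [AffineMap.lineMap_apply_module] using
    hφ.2 (left_mem_Icc.2 zero_le_one) (right_mem_Icc.2 zero_le_one) ha hb hab

end SecondDerivativeTest

theorem hess_apply_of_hasFDerivAt {n : ℕ} {u : EuclideanSpace ℝ (Fin n) → ℝ}
    {u' : EuclideanSpace ℝ (Fin n) → EuclideanSpace ℝ (Fin n) →L[ℝ] ℝ}
    {u'' : EuclideanSpace ℝ (Fin n) → EuclideanSpace ℝ (Fin n) →L[ℝ] ℝ}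
    {x : EuclideanSpace ℝ (Fin n)} (hu : ∀ᶠ y in 𝓝 x, HasFDerivAt u (u' y) y)
    (hu' : ∀ v, HasFDerivAt (fun y => u' y v) (u'' v) x) (i j : Fin n) :
    hess u x i j = u'' (EuclideanSpace.single j 1) (EuclideanSpace.single i 1) := by
  have : (fun y => fderiv ℝ u y (EuclideanSpace.single j 1)) =ᶠ[𝓝 x]
      fun y => u' y (EuclideanSpace.single j 1) :=
    hu.mono fun y hy => by simp only [hy.fderiv]
  rw [hess, this.fderiv_eq, (hu' _).fderiv]

namespace Matrix

variable {ι K : Type*} [DecidableEq ι]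

def arrowhead [Zero K] (N : ι) (s : K) (b : ι → K) (c : K) : Matrix ι ι K :=
  of fun i j => if i = N then (if j = N then s else b j)
    else if j = N then b i else if i = j then c else 0

lemma arrowhead_update_self [Zero K] (N : ι) (s : K) (b : ι → K) (a c : K) :
    arrowhead N s (Function.update b N a) c = arrowhead N s b c := by
  ext i j
  simp +contextual [arrowhead]

variable [Fintype ι] [Field K]

lemma arrowhead_eq_mul_diagonal_mul_transpose (N : ι) (s : K) {b : ι → K} (hb : b N = 0)
    {c : K} (hc : c ≠ 0) :
    arrowhead N s b c = (1 + vecMulVec (Pi.single N 1) (c⁻¹ • b))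
      * diagonal (Function.update (fun _ => c) N (s - (∑ k, b k ^ 2) / c))
      * (1 + vecMulVec (Pi.single N 1) (c⁻¹ • b))ᵀ := by
  set L : Matrix ι ι K := 1 + vecMulVec (Pi.single N 1) (c⁻¹ • b)
  set d : ι → K := Function.update (fun _ => c) N (s - (∑ k, b k ^ 2) / c)
  have hL : ∀ i k, L i k = (if i = k then 1 else 0) + if i = N then c⁻¹ * b k else 0 := by
    intro i k
    simp [L, vecMulVec_apply, Pi.single_apply, one_apply]
  have hsq : ∑ k, b k ^ 2 = ∑ k ∈ {N}ᶜ, b k ^ 2 := by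
    simp [Fintype.sum_eq_add_sum_compl N, hb]
  ext i j
  rw [mul_apply, Fintype.sum_eq_add_sum_compl N]
  simp only [mul_diagonal, transpose_apply]
  rw [Finset.sum_congr rfl fun k hk => by
    rw [show d k = c from Function.update_of_ne (by simpa using hk) _ _]]
  by_cases hi : i = N <;> by_cases hj : j = N
  · rw [hi, hj]
    have hterm : ∀ k ∈ ({N}ᶜ : Finset ι), L N k * c * L N k = b k ^ 2 / c := fun k hk => by
      simp [hL, (by simpa using hk : k ≠ N).symm]
      field_simp
    rw [Finset.sum_congr rfl hterm]
    simp [arrowhead, d, hL, hb, hsq, Finset.sum_div]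
  · rw [hi]
    simp [arrowhead, d, hL, hb, hj, Ne.symm hj]
    field_simp
  · rw [hj]
    simp [arrowhead, d, hL, hb, hi, Ne.symm hi]
    field_simp
  · simp [arrowhead, d, hL, hi, hj]

theorem det_arrowhead (N : ι) (s : K) (b : ι → K) {c : K} (hc : c ≠ 0) :
    (arrowhead N s b c).det = (s - (∑ k ∈ {N}ᶜ, b k ^ 2) / c) * c ^ (Fintype.card ι - 1) := by
  set b' := Function.update b N 0
  have hb' : b' N = 0 := Function.update_self ..
  have hsq : ∑ k ∈ {N}ᶜ, b k ^ 2 = ∑ k, b' k ^ 2 := by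
    rw [Fintype.sum_eq_add_sum_compl N, hb', zero_pow two_ne_zero, zero_add]
    exact Finset.sum_congr rfl fun k hk =>
      congrArg (· ^ 2) (Function.update_of_ne (by simpa using hk) _ _).symm
  have hL : (1 + vecMulVec (Pi.single N 1) (c⁻¹ • b')).det = 1 := by
    rw [vecMulVec_eq Unit, det_one_add_replicateCol_mul_replicateRow]
    simp [hb']
  rw [← arrowhead_update_self N s b 0 c, arrowhead_eq_mul_diagonal_mul_transpose N s hb' hc,
    det_mul, det_mul, det_transpose, hL, det_diagonal,
    Finset.prod_update_of_mem (Finset.mem_univ N), hsq]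
  simp [Finset.prod_const, Finset.card_sdiff]

end Matrix

section EuclideanCoordinates

variable {ι : Type*} [Fintype ι] (N : ι)

lemma sq_apply_le_norm_sq (y : EuclideanSpace ℝ ι) : y N ^ 2 ≤ ‖y‖ ^ 2 := by
  simpa [sq_abs] using pow_le_pow_left₀ (abs_nonneg _) (PiLp.norm_apply_le y N) 2

lemma norm_sq_sub_sq_apply_le_sq {y : EuclideanSpace ℝ ι} {K : ℝ} (hy : ‖y‖ < K) :
    ‖y‖ ^ 2 - y N ^ 2 ≤ K ^ 2 := by
  nlinarith [norm_nonneg y, sq_nonneg (y N)]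

lemma norm_sq_sub_sq_apply_eq_sum [DecidableEq ι] (y : EuclideanSpace ℝ ι) :
    ‖y‖ ^ 2 - y N ^ 2 = ∑ k ∈ {N}ᶜ, y k ^ 2 := by
  rw [EuclideanSpace.real_norm_sq_eq, Fintype.sum_eq_add_sum_compl N]
  ring

end EuclideanCoordinates

noncomputable section Barrier

variable {ι : Type*} [Fintype ι] (N : ι) (δ A : ℝ)

def barrier (y : EuclideanSpace ℝ ι) : ℝ := (‖y‖ ^ 2 - y N ^ 2 - A) * y N ^ δ

def innerExceptSL (y : EuclideanSpace ℝ ι) : EuclideanSpace ℝ ι →L[ℝ] ℝ :=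
  innerSL ℝ y - y N • EuclideanSpace.proj N

def barrierFDeriv (y : EuclideanSpace ℝ ι) : EuclideanSpace ℝ ι →L[ℝ] ℝ :=
  (2 * y N ^ δ) • innerExceptSL N y
    + ((‖y‖ ^ 2 - y N ^ 2 - A) * (δ * y N ^ (δ - 1))) • EuclideanSpace.proj N

def barrierFDeriv2 (x v : EuclideanSpace ℝ ι) : EuclideanSpace ℝ ι →L[ℝ] ℝ :=
  x N ^ (δ - 2) • ((2 * x N ^ 2) • innerExceptSL N v
    + (2 * δ * x N * innerExceptSL N x v) • EuclideanSpace.proj N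
    + (2 * δ * x N * v N) • innerExceptSL N x
    + ((‖x‖ ^ 2 - x N ^ 2 - A) * δ * (δ - 1) * v N) • EuclideanSpace.proj N)

variable {δ A}

@[simp]
lemma innerExceptSL_apply (y v : EuclideanSpace ℝ ι) :
    innerExceptSL N y v = ⟪y, v⟫ - y N * v N := by
  simp [innerExceptSL]

lemma hasFDerivAt_innerExceptSL_apply (v x : EuclideanSpace ℝ ι) :
    HasFDerivAt (fun y => innerExceptSL N y v) (innerExceptSL N v) x := by
  refine ((hasFDerivAt_id x).inner ℝ (hasFDerivAt_const v x)).sub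
    ((EuclideanSpace.proj N).hasFDerivAt.mul_const (v N)) |>.congr_fderiv ?_
  ext u
  simp [real_inner_comm]

lemma hasFDerivAt_norm_sq_sub_sq_apply (x : EuclideanSpace ℝ ι) :
    HasFDerivAt (fun y => ‖y‖ ^ 2 - y N ^ 2) ((2 : ℝ) • innerExceptSL N x) x := by
  refine (hasStrictFDerivAt_norm_sq x).hasFDerivAt.sub
    ((EuclideanSpace.proj N).hasFDerivAt.pow 2) |>.congr_fderiv ?_
  ext u
  simp
  ring

lemma hasFDerivAt_barrier {y : EuclideanSpace ℝ ι} (hy : y N ≠ 0) :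
    HasFDerivAt (barrier N δ A) (barrierFDeriv N δ A y) y := by
  refine ((hasFDerivAt_norm_sq_sub_sq_apply N y).sub_const A).mul
    ((EuclideanSpace.proj N).hasFDerivAt.rpow_const (Or.inl hy)) |>.congr_fderiv ?_
  ext u
  simp [barrierFDeriv]
  ring

lemma hasFDerivAt_barrierFDeriv_apply {x : EuclideanSpace ℝ ι} (hx : x N ≠ 0)
    (v : EuclideanSpace ℝ ι) :
    HasFDerivAt (fun y => barrierFDeriv N δ A y v) (barrierFDeriv2 N δ A x v) x := by
  have hproj := (EuclideanSpace.proj (𝕜 := ℝ) N).hasFDerivAt (x := x)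
  refine (((hproj.rpow_const (p := δ) (Or.inl hx)).const_mul 2).mul
      (hasFDerivAt_innerExceptSL_apply N v x)).add
    ((((hasFDerivAt_norm_sq_sub_sq_apply N x).sub_const A).mul
      ((hproj.rpow_const (p := δ - 1) (Or.inl hx)).const_mul δ)).mul_const (v N))
    |>.congr_fderiv ?_
  have h1 : x N ^ (δ - 1) = x N ^ (δ - 2) * x N := by
    rw [← Real.rpow_add_one hx]; ring_nf
  have h0 : x N ^ δ = x N ^ (δ - 2) * x N ^ 2 := by
    rw [sq, ← mul_assoc, ← h1, ← Real.rpow_add_one hx]; ring_nf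
  ext u
  simp [barrierFDeriv2, h0, h1, show δ - 1 - 1 = δ - 2 by ring]
  ring

lemma barrierFDeriv2_self_nonneg (hδ : 0 ≤ δ) {x : EuclideanSpace ℝ ι} (hx : 0 < x N)
    (hA : 2 * δ * (‖x‖ ^ 2 - x N ^ 2) ≤ (1 - δ) * (A - (‖x‖ ^ 2 - x N ^ 2)))
    (v : EuclideanSpace ℝ ι) : 0 ≤ barrierFDeriv2 N δ A x v v := by
  set u := x N • v + (δ * v N) • x
  have hu : barrierFDeriv2 N δ A x v v = x N ^ (δ - 2) * (2 * (‖u‖ ^ 2 - u N ^ 2)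
      + δ * ((1 - δ) * (A - (‖x‖ ^ 2 - x N ^ 2)) - 2 * δ * (‖x‖ ^ 2 - x N ^ 2)) * v N ^ 2) := by
    rw [norm_add_sq_real, norm_smul, norm_smul, real_inner_smul_left, real_inner_smul_right,
      mul_pow, mul_pow, Real.norm_eq_abs, Real.norm_eq_abs, sq_abs, sq_abs]
    simp [barrierFDeriv2, u, real_inner_comm]
    ring
  have := sub_nonneg.2 (sq_apply_le_norm_sq N u)
  have := Real.rpow_nonneg hx.le (δ - 2)
  have : 0 ≤ (1 - δ) * (A - (‖x‖ ^ 2 - x N ^ 2)) - 2 * δ * (‖x‖ ^ 2 - x N ^ 2) := by linarith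
  rw [hu]
  positivity

lemma convexOn_barrier (hδ : 0 ≤ δ) {K : ℝ} (hA : 2 * δ * K ^ 2 ≤ (1 - δ) * (A - K ^ 2)) :
    ConvexOn ℝ {x : EuclideanSpace ℝ ι | ‖x‖ < K ∧ 0 < x N} (barrier N δ A) := by
  have hs : {x : EuclideanSpace ℝ ι | ‖x‖ < K ∧ 0 < x N} = ball 0 K ∩ {x | 0 < x N} := by
    ext; simp
  refine convexOn_of_hasFDerivAt2_nonneg ?_ (fun x hx => hasFDerivAt_barrier N hx.2.ne')
    (fun x hx => hasFDerivAt_barrierFDeriv_apply N hx.2.ne')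
    (fun x hx => barrierFDeriv2_self_nonneg N hδ hx.2 ?_)
  · rw [hs]
    exact (convex_ball 0 K).inter
      (convex_halfSpace_gt (EuclideanSpace.proj N : EuclideanSpace ℝ ι →L[ℝ] ℝ).isLinear 0)
  · have := sub_nonneg.2 (sq_apply_le_norm_sq N x)
    have := norm_sq_sub_sq_apply_le_sq N hx.1
    nlinarith

end Barrier

section HessianDeterminant

variable {n : ℕ} (N : Fin n) {δ A : ℝ}

lemma hess_barrier {x : EuclideanSpace ℝ (Fin n)} (hx : 0 < x N) :
    hess (barrier N δ A) x = x N ^ (δ - 2) •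
      Matrix.arrowhead N ((‖x‖ ^ 2 - x N ^ 2 - A) * δ * (δ - 1)) (fun j => 2 * δ * x N * x j)
        (2 * x N ^ 2) := by
  have hnear : ∀ᶠ y in 𝓝 x, HasFDerivAt (barrier N δ A) (barrierFDeriv N δ A y) y :=
    (continuousAt_const.eventually_lt (EuclideanSpace.proj N).continuous.continuousAt hx).mono
      fun y hy => hasFDerivAt_barrier N hy.ne'
  ext i j
  rw [hess_apply_of_hasFDerivAt hnear (hasFDerivAt_barrierFDeriv_apply N hx.ne')]
  by_cases hi : i = N <;> by_cases hj : j = N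
  · subst hi hj
    simp [barrierFDeriv2, Matrix.arrowhead, EuclideanSpace.inner_single_right]
  · subst hi
    simp [barrierFDeriv2, Matrix.arrowhead, EuclideanSpace.inner_single_right, hj, Ne.symm hj]
  · subst hj
    simp [barrierFDeriv2, Matrix.arrowhead, EuclideanSpace.inner_single_right, hi, Ne.symm hi]
  · simp [barrierFDeriv2, Matrix.arrowhead, EuclideanSpace.inner_single_right, PiLp.single_apply,
      Ne.symm hi, Ne.symm hj, eq_comm]

lemma det_hess_barrier {x : EuclideanSpace ℝ (Fin n)} (hx : 0 < x N) :
    (hess (barrier N δ A) x).det = 2 ^ (n - 1) * δ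
      * ((1 - δ) * (A - (‖x‖ ^ 2 - x N ^ 2)) - 2 * δ * (‖x‖ ^ 2 - x N ^ 2)) * x N ^ (δ * n - 2) := by
  have hn : 1 ≤ n := N.pos
  have hpow : x N ^ (δ * n - 2) = (x N ^ (δ - 2)) ^ n * (x N ^ 2) ^ (n - 1) := by
    rw [← Real.rpow_natCast, ← Real.rpow_mul hx.le, ← pow_mul,
      ← Real.rpow_natCast (x N) (2 * (n - 1)), ← Real.rpow_add hx]
    push_cast [hn]
    ring_nf
  have hsum : ∑ k ∈ {N}ᶜ, (2 * δ * x N * x k) ^ 2 = (2 * δ * x N) ^ 2 * (‖x‖ ^ 2 - x N ^ 2) := by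
    simp_rw [mul_pow _ (x _), ← Finset.mul_sum, norm_sq_sub_sq_apply_eq_sum]
  rw [hess_barrier N hx, Matrix.det_smul, Matrix.det_arrowhead N _ _ (by positivity),
    Fintype.card_fin, hsum, hpow, mul_pow]
  field_simp
  ring

lemma le_det_hess_barrier {K R p : ℝ} (hδ : 0 < δ)
    (hδp : δ * n - 2 = δ * (p - 1)) (hp : p ≤ 1) (hR : 0 ≤ R) (hA1 : 1 ≤ A - K ^ 2)
    (hA : R ≤ δ * ((1 - δ) * (A - K ^ 2) - 2 * δ * K ^ 2)) {x : EuclideanSpace ℝ (Fin n)}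
    (hxK : ‖x‖ < K) (hx : 0 < x N) :
    R * (-barrier N δ A x) ^ (p - 1) ≤ (hess (barrier N δ A) x).det := by
  have hq0 := sub_nonneg.2 (sq_apply_le_norm_sq N x)
  have hqK := norm_sq_sub_sq_apply_le_sq N hxK
  set q := ‖x‖ ^ 2 - x N ^ 2
  have hneg : -barrier N δ A x = (A - q) * x N ^ δ := by
    simp only [barrier, q]; ring
  -- `(1 - δ) * (A - q) - 2 * δ * q` is decreasing in `q`, and `q ≤ K ^ 2`
  have hRδ : R ≤ δ * ((1 - δ) * (A - q) - 2 * δ * q) := by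
    nlinarith [mul_nonneg (mul_nonneg hδ.le (by linarith : 0 ≤ 1 + δ)) (sub_nonneg.2 hqK)]
  have h2 : (1 : ℝ) ≤ 2 ^ (n - 1) := one_le_pow₀ one_le_two
  have hT : 0 < x N ^ (δ * (p - 1)) := Real.rpow_pos_of_pos hx _
  rw [det_hess_barrier N hx, hneg, Real.mul_rpow (by linarith) (Real.rpow_nonneg hx.le _),
    ← Real.rpow_mul hx.le, hδp]
  calc R * ((A - q) ^ (p - 1) * x N ^ (δ * (p - 1)))
      ≤ R * x N ^ (δ * (p - 1)) := by
        gcongr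
        exact mul_le_of_le_one_left hT.le
          (Real.rpow_le_one_of_one_le_of_nonpos (by linarith) (by linarith))
    _ ≤ 2 ^ (n - 1) * δ * ((1 - δ) * (A - q) - 2 * δ * q) * x N ^ (δ * (p - 1)) := by
        gcongr
        rw [mul_assoc]
        nlinarith

end HessianDeterminant

/-- the barrier `w(x) = (‖x'‖² - A) xₙ^δ`, with `δ = 2/(n+1-p)`, is convex on
the half-ball `B_K⁺` and satisfies `det D²w ≥ R̄ (-w)^{p-1}` there, for suitable `A > K²`.
Here `‖x'‖² = ‖x‖² - xₙ²` and `xₙ` is the last coordinate. -/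
theorem stmt8 (n : ℕ) (hn : 2 ≤ n) (p : ℝ) (hp : p < 1) (δ : ℝ)
    (hδ : δ = 2 / ((n : ℝ) + 1 - p)) (K Rbar : ℝ) (hRbar : 0 < Rbar) :
    ∃ A : ℝ, K ^ 2 < A ∧
      ConvexOn ℝ {x : EuclideanSpace ℝ (Fin n) | ‖x‖ < K ∧ 0 < x ⟨n - 1, by omega⟩}
        (fun x => (‖x‖ ^ 2 - (x ⟨n - 1, by omega⟩) ^ 2 - A) * (x ⟨n - 1, by omega⟩) ^ δ) ∧
      ∀ x : EuclideanSpace ℝ (Fin n), ‖x‖ < K → 0 < x ⟨n - 1, by omega⟩ →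
        Rbar * (-((‖x‖ ^ 2 - (x ⟨n - 1, by omega⟩) ^ 2 - A) * (x ⟨n - 1, by omega⟩) ^ δ)) ^ (p - 1)
          ≤ (hess (fun y => (‖y‖ ^ 2 - (y ⟨n - 1, by omega⟩) ^ 2 - A) * (y ⟨n - 1, by omega⟩) ^ δ) x).det := by
  have hn' : (2 : ℝ) ≤ n := by exact_mod_cast hn
  have hpos : 0 < (n : ℝ) + 1 - p := by linarith
  have hδ0 : 0 < δ := hδ ▸ div_pos two_pos hpos
  have hδ1 : δ < 1 := by rw [hδ, div_lt_one hpos]; linarith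
  have hδp : δ * n - 2 = δ * (p - 1) := by
    linear_combination (hδ ▸ div_mul_cancel₀ 2 hpos.ne' : δ * (n + 1 - p) = 2)
  -- `A = K ^ 2 + 1 + C`: the `1` gives `(A - q) ^ (p - 1) ≤ 1`, the `C` pays for `Rbar` and `2δq`
  obtain ⟨C, hC0, hC⟩ : ∃ C, 0 ≤ C ∧ (1 - δ) * C = Rbar / δ + 2 * δ * K ^ 2 :=
    ⟨_, by positivity, mul_div_cancel₀ _ (sub_pos.2 hδ1).ne'⟩
  have hA : Rbar ≤ δ * ((1 - δ) * (K ^ 2 + 1 + C - K ^ 2) - 2 * δ * K ^ 2) := by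
    rw [show (1 - δ) * (K ^ 2 + 1 + C - K ^ 2) = (1 - δ) + (1 - δ) * C by ring, hC,
      mul_sub, mul_add, mul_add, mul_div_cancel₀ _ hδ0.ne']
    nlinarith
  refine ⟨K ^ 2 + 1 + C, by linarith, convexOn_barrier _ hδ0.le ?_,
    fun x hxK hx => le_det_hess_barrier _ hδ0 hδp hp.le hRbar.le (by linarith) hA hxK hx⟩
  nlinarith [div_nonneg hRbar.le hδ0.le]
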